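/- Let G be a locally finite weighted graph with a base vertex p and suppose Deg(x) ≤ C·d(x,p)^{A₃} for all x, with C > 0, A₃ ≥ 0. Let u be an ancient solution of the heat equation on V × [−T, 0] satisfying |u(x,t)| ≤ A₁·exp(A₂·d(x,p)·ln d(x,p)) for all (x,t), with A₁, A₂ > 0 and A₂ + A₃ < 1. Then for every x ∈ V, the function t ↦ u(x,t) is real analytic on [−T, 0] with infinite radius of convergence of its Taylor series; i.e., for any t₀ ∈ [−T,0] and any t ∈ [−T,0], u(x,t) = Σ_{j≥0} ∂_t^j u(x,t₀)·(t−t₀)^j/j!. -/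

import Mathlib

open Real Filter

/-- A weighted graph: symmetric nonnegative edge weights, positive vertex
weights, locally finite. -/
structure WeightedGraph (V : Type*) where
  ω : V → V → ℝ
  μ : V → ℝ
  symm : ∀ x y, ω x y = ω y x
  nonneg : ∀ x y, 0 ≤ ω x y
  loopless : ∀ x, ω x x = 0
  μ_pos : ∀ x, 0 < μ x
  locFin : ∀ x, (Function.support (ω x)).Finite

namespace WeightedGraph

variable {V : Type*}

/-- The graph Laplacian Δf(x) = Σ_y (ω_{xy}/μ_x)(f(y) - f(x)). -/
noncomputable def lap (G : WeightedGraph V) (f : V → ℝ) (x : V) : ℝ :=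
  ∑' y, (G.ω x y / G.μ x) * (f y - f x)

/-- The weighted degree Deg(x) = Σ_y ω_{xy}/μ_x. -/
noncomputable def deg (G : WeightedGraph V) (x : V) : ℝ :=
  ∑' y, G.ω x y / G.μ x

/-- The underlying simple graph: x ~ y iff ω_{xy} ≠ 0. -/
def adj (G : WeightedGraph V) : SimpleGraph V :=
  SimpleGraph.fromRel (fun x y => G.ω x y ≠ 0)

/-- The combinatorial graph distance. -/
noncomputable def dist (G : WeightedGraph V) (x y : V) : ℕ := G.adj.dist x y

/-- Iterated Laplacian Δ^k. -/
noncomputable def lapIter (G : WeightedGraph V) : ℕ → (V → ℝ) → (V → ℝ)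
  | 0, f => f
  | (k+1), f => G.lap (G.lapIter k f)

end WeightedGraph

open Topology


namespace WeightedGraph
variable {V : Type*}

lemma lapIter_succ (G : WeightedGraph V) (k : ℕ) (f : V → ℝ) :
    G.lapIter (k+1) f = G.lap (G.lapIter k f) := rfl

lemma lap_eq_sum (G : WeightedGraph V) (f : V → ℝ) (x : V) :
    G.lap f x = ∑ y ∈ (G.locFin x).toFinset, (G.ω x y / G.μ x) * (f y - f x) := by
  refine tsum_eq_sum ?_
  intro y hy
  have h : G.ω x y = 0 := by
    by_contra h
    exact hy ((G.locFin x).mem_toFinset.mpr h)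
  simp [h]

lemma deg_eq_sum (G : WeightedGraph V) (x : V) :
    G.deg x = ∑ y ∈ (G.locFin x).toFinset, G.ω x y / G.μ x := by
  refine tsum_eq_sum ?_
  intro y hy
  have h : G.ω x y = 0 := by
    by_contra h
    exact hy ((G.locFin x).mem_toFinset.mpr h)
  simp [h]

lemma lap_abs_le (G : WeightedGraph V) (f : V → ℝ) (x : V) {M : ℝ} (hM : 0 ≤ M)
    (hx : |f x| ≤ M) (hnb : ∀ y, G.ω x y ≠ 0 → |f y| ≤ M) :
    |G.lap f x| ≤ 2 * G.deg x * M := by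
  rw [lap_eq_sum, deg_eq_sum]
  calc |∑ y ∈ (G.locFin x).toFinset, (G.ω x y / G.μ x) * (f y - f x)|
      ≤ ∑ y ∈ (G.locFin x).toFinset, |(G.ω x y / G.μ x) * (f y - f x)| :=
        Finset.abs_sum_le_sum_abs _ _
    _ ≤ ∑ y ∈ (G.locFin x).toFinset, (G.ω x y / G.μ x) * (2 * M) := by
        refine Finset.sum_le_sum ?_
        intro y hy
        have hc : 0 ≤ G.ω x y / G.μ x := div_nonneg (G.nonneg x y) (G.μ_pos x).le
        rw [abs_mul, abs_of_nonneg hc]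
        refine mul_le_mul_of_nonneg_left ?_ hc
        have hy' : G.ω x y ≠ 0 := Function.mem_support.mp ((G.locFin x).mem_toFinset.mp hy)
        have h1 := hnb y hy'
        calc |f y - f x| ≤ |f y| + |f x| := abs_sub _ _
          _ ≤ 2 * M := by linarith
    _ = 2 * (∑ y ∈ (G.locFin x).toFinset, G.ω x y / G.μ x) * M := by
        rw [← Finset.sum_mul]; ring
  
lemma dist_nb (G : WeightedGraph V) (hconn : G.adj.Connected) (p z y : V)
    (h : G.ω z y ≠ 0) : G.dist y p ≤ G.dist z p + 1 := by
  have hzy : y ≠ z := by intro he; subst he; exact h (G.loopless _)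
  have hadj : G.adj.Adj y z := by
    show (SimpleGraph.fromRel _).Adj y z
    rw [SimpleGraph.fromRel_adj]
    exact ⟨hzy, Or.inr h⟩
  have h1 : G.adj.dist y z = 1 := SimpleGraph.dist_eq_one_iff_adj.mpr hadj
  have h2 : G.adj.dist y p ≤ G.adj.dist y z + G.adj.dist z p := hconn.dist_triangle
  unfold WeightedGraph.dist
  omega

end WeightedGraph



noncomputable def phiE (A₂ A₃ : ℝ) (j n : ℕ) : ℝ :=
  A₂ * n * Real.log n + A₃ * j * Real.log n

lemma natlog_nonneg (n : ℕ) : 0 ≤ Real.log n := by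
  rcases Nat.eq_zero_or_pos n with rfl | hn
  · simp
  · exact Real.log_nonneg (by exact_mod_cast hn)

lemma natlog_mono {m n : ℕ} (h : m ≤ n) : Real.log m ≤ Real.log n := by
  rcases Nat.eq_zero_or_pos m with rfl | hm
  · simpa using natlog_nonneg n
  · exact Real.log_le_log (by exact_mod_cast hm) (by exact_mod_cast h)

lemma phiE_mono (A₂ A₃ : ℝ) (h2 : 0 ≤ A₂) (h3 : 0 ≤ A₃) (j : ℕ) {m n : ℕ} (h : m ≤ n) :
    phiE A₂ A₃ j m ≤ phiE A₂ A₃ j n := by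
  unfold phiE
  have h1 : (m:ℝ) * Real.log m ≤ (n:ℝ) * Real.log n := by
    rcases Nat.eq_zero_or_pos m with rfl | hm
    · simpa using mul_nonneg (Nat.cast_nonneg n) (natlog_nonneg n)
    · exact mul_le_mul (by exact_mod_cast h) (natlog_mono h)
        (by simpa using natlog_nonneg m) (Nat.cast_nonneg n)
  have h2' : A₂ * m * Real.log m ≤ A₂ * n * Real.log n := by
    rw [mul_assoc, mul_assoc]; exact mul_le_mul_of_nonneg_left h1 h2
  have h3' : A₃ * j * Real.log m ≤ A₃ * j * Real.log n :=
    mul_le_mul_of_nonneg_left (natlog_mono h) (by positivity)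
  linarith

lemma phiE_succ (A₂ A₃ : ℝ) (j n : ℕ) :
    phiE A₂ A₃ (j+1) n = phiE A₂ A₃ j n + A₃ * Real.log n := by
  unfold phiE; push_cast; ring

lemma log_ratio (n : ℕ) : (n:ℝ) * (Real.log ((n:ℝ)+1) - Real.log n) ≤ 1 := by
  rcases Nat.eq_zero_or_pos n with rfl | hn
  · simp
  · have hn' : (0:ℝ) < n := by exact_mod_cast hn
    have h1 : Real.log ((n:ℝ)+1) - Real.log n = Real.log (((n:ℝ)+1)/n) := by
      rw [Real.log_div (by positivity) (ne_of_gt hn')]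
    rw [h1]
    have h2 : Real.log (((n:ℝ)+1)/n) ≤ ((n:ℝ)+1)/n - 1 :=
      Real.log_le_sub_one_of_pos (by positivity)
    have h3 : ((n:ℝ)+1)/n - 1 = 1/n := by field_simp; ring
    calc (n:ℝ) * Real.log (((n:ℝ)+1)/n) ≤ (n:ℝ) * (1/n) := by
          refine mul_le_mul_of_nonneg_left ?_ hn'.le
          rw [← h3]; exact h2
      _ = 1 := by field_simp

lemma phiE_step (A₂ A₃ : ℝ) (h2 : 0 ≤ A₂) (h3 : 0 ≤ A₃) {j n : ℕ} (hjn : j ≤ n) :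
    phiE A₂ A₃ (j+1) (n+1) ≤ phiE A₂ A₃ j n + (A₂ + A₃) * (Real.log ((n:ℝ)+1) + 1) := by
  unfold phiE
  push_cast
  have hL : Real.log (n:ℝ) ≤ Real.log ((n:ℝ)+1) := by
    have := natlog_mono (Nat.le_succ n); push_cast at this; exact this
  have hr := log_ratio n
  have hj : (j:ℝ) ≤ (n:ℝ) := by exact_mod_cast hjn
  have hd : 0 ≤ Real.log ((n:ℝ)+1) - Real.log n := by linarith
  have hjr : (j:ℝ) * (Real.log ((n:ℝ)+1) - Real.log n) ≤ 1 :=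
    le_trans (mul_le_mul_of_nonneg_right hj hd) hr
  nlinarith [mul_le_mul_of_nonneg_left hr h2, mul_le_mul_of_nonneg_left hjr h3]

lemma rpow_le_exp_log_mul {A : ℝ} (hA : 0 ≤ A) (d : ℕ) {b : ℝ} (hlb : Real.log d ≤ b)
    (hb : 0 ≤ b) : (d:ℝ) ^ A ≤ Real.exp (A * b) := by
  rcases Nat.eq_zero_or_pos d with rfl | hd
  · simp only [Nat.cast_zero]
    calc (0:ℝ)^A ≤ 1 := Real.rpow_le_one le_rfl zero_le_one hA
      _ ≤ Real.exp (A*b) := Real.one_le_exp (by positivity)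
  · have hd' : (0:ℝ) < d := by exact_mod_cast hd
    rw [Real.rpow_def_of_pos hd']
    refine Real.exp_le_exp.mpr ?_
    rw [mul_comm]
    exact mul_le_mul_of_nonneg_left hlb hA

lemma summable_master (C A₁ A₂ A₃ T : ℝ) (hC : 0 < C) (hA₁ : 0 < A₁) (h2 : 0 ≤ A₂)
    (h3 : 0 ≤ A₃) (hT : 0 < T) (hsum : A₂ + A₃ < 1) (d : ℕ) :
    Summable (fun j : ℕ => (2*C)^j * A₁ * Real.exp (phiE A₂ A₃ j (d + j)) * T^j *
      ((j:ℝ)+1) / (Nat.factorial j : ℝ)) := by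
  set c : ℕ → ℝ := fun j : ℕ => (2*C)^j * A₁ * Real.exp (phiE A₂ A₃ j (d + j)) * T^j *
      ((j:ℝ)+1) / (Nat.factorial j : ℝ) with hcdef
  have h2C : (0:ℝ) < 2*C := by linarith
  have hpos : ∀ j, 0 < c j := by
    intro j
    have hf : (0:ℝ) < (Nat.factorial j : ℝ) := by exact_mod_cast Nat.factorial_pos j
    have hj1 : (0:ℝ) < (j:ℝ)+1 := by positivity
    exact div_pos (mul_pos (mul_pos (mul_pos (mul_pos (pow_pos h2C j) hA₁)
      (Real.exp_pos _)) (pow_pos hT j)) hj1) hf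
  set K : ℝ := 2*C*T*Real.exp (A₂+A₃) * ((d:ℝ)+1)^(A₂+A₃) * 2 with hKdef
  have hstep : ∀ j : ℕ, c (j+1) ≤ (K * ((j:ℝ)+1)^(A₂+A₃-1)) * c j := by
    intro j
    have hj1 : (0:ℝ) < (j:ℝ)+1 := by positivity
    have hn1 : (0:ℝ) < (d:ℝ)+(j:ℝ)+1 := by positivity
    have hfj : (Nat.factorial j : ℝ) ≠ 0 := by
      exact_mod_cast (Nat.factorial_pos j).ne'
    have hfact1 : (Nat.factorial (j+1) : ℝ) = ((j:ℝ)+1) * (Nat.factorial j : ℝ) := by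
      rw [Nat.factorial_succ]; push_cast; ring
    have hphi : phiE A₂ A₃ (j+1) (d+j+1) ≤ phiE A₂ A₃ j (d+j) +
        (A₂+A₃) * (Real.log ((d:ℝ)+(j:ℝ)+1) + 1) := by
      have h := phiE_step A₂ A₃ h2 h3 (Nat.le_add_left j d)
      push_cast at h
      convert h using 3 <;> push_cast <;> ring
    have hE' : Real.exp (phiE A₂ A₃ (j+1) (d+j+1)) ≤ Real.exp (phiE A₂ A₃ j (d+j)) *
        (Real.exp (A₂+A₃) * (((d:ℝ)+1)^(A₂+A₃) * ((j:ℝ)+1)^(A₂+A₃))) := by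
      have h4 : Real.exp ((A₂+A₃) * (Real.log ((d:ℝ)+(j:ℝ)+1) + 1))
          = ((d:ℝ)+(j:ℝ)+1)^(A₂+A₃) * Real.exp (A₂+A₃) := by
        rw [mul_add, mul_one, Real.exp_add, Real.rpow_def_of_pos hn1, mul_comm (Real.log _)]
      have hsp : ((d:ℝ)+(j:ℝ)+1)^(A₂+A₃) ≤ ((d:ℝ)+1)^(A₂+A₃) * ((j:ℝ)+1)^(A₂+A₃) := by
        rw [← Real.mul_rpow (by positivity) (by positivity)]
        refine Real.rpow_le_rpow (by positivity) ?_ (by linarith)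
        nlinarith [(Nat.cast_nonneg d : (0:ℝ) ≤ d), (Nat.cast_nonneg j : (0:ℝ) ≤ j)]
      calc Real.exp (phiE A₂ A₃ (j+1) (d+j+1))
          ≤ Real.exp (phiE A₂ A₃ j (d+j) + (A₂+A₃) * (Real.log ((d:ℝ)+(j:ℝ)+1) + 1)) :=
            Real.exp_le_exp.mpr hphi
        _ = Real.exp (phiE A₂ A₃ j (d+j)) * (((d:ℝ)+(j:ℝ)+1)^(A₂+A₃) * Real.exp (A₂+A₃)) := by
            rw [Real.exp_add, h4]
        _ ≤ Real.exp (phiE A₂ A₃ j (d+j)) *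
            (Real.exp (A₂+A₃) * (((d:ℝ)+1)^(A₂+A₃) * ((j:ℝ)+1)^(A₂+A₃))) := by
            refine mul_le_mul_of_nonneg_left ?_ (Real.exp_pos _).le
            rw [mul_comm (Real.exp (A₂+A₃))]
            exact mul_le_mul_of_nonneg_right hsp (Real.exp_pos _).le
    have hX : (0:ℝ) ≤ (2*C)^(j+1) * A₁ := mul_nonneg (pow_nonneg h2C.le _) hA₁.le
    have hTp : (0:ℝ) ≤ T^(j+1) := pow_nonneg hT.le _
    have hEbig : (0:ℝ) ≤ Real.exp (phiE A₂ A₃ j (d+j)) *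
        (Real.exp (A₂+A₃) * (((d:ℝ)+1)^(A₂+A₃) * ((j:ℝ)+1)^(A₂+A₃))) := by positivity
    calc c (j+1) = (2*C)^(j+1) * A₁ * Real.exp (phiE A₂ A₃ (j+1) (d+j+1)) * T^(j+1) *
          ((j:ℝ)+2) / (((j:ℝ)+1) * (Nat.factorial j : ℝ)) := by
          simp only [hcdef]
          rw [hfact1]
          have : d + (j+1) = d+j+1 := by omega
          rw [this]
          push_cast; ring
      _ ≤ (2*C)^(j+1) * A₁ * (Real.exp (phiE A₂ A₃ j (d+j)) *
          (Real.exp (A₂+A₃) * (((d:ℝ)+1)^(A₂+A₃) * ((j:ℝ)+1)^(A₂+A₃)))) * T^(j+1) *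
          (2*((j:ℝ)+1)) / (((j:ℝ)+1) * (Nat.factorial j : ℝ)) := by
          rw [div_le_div_iff_of_pos_right (by positivity : (0:ℝ) < ((j:ℝ)+1) * (Nat.factorial j : ℝ))]
          have h5 : (2*C)^(j+1) * A₁ * Real.exp (phiE A₂ A₃ (j+1) (d+j+1)) * T^(j+1)
              ≤ (2*C)^(j+1) * A₁ * (Real.exp (phiE A₂ A₃ j (d+j)) *
                (Real.exp (A₂+A₃) * (((d:ℝ)+1)^(A₂+A₃) * ((j:ℝ)+1)^(A₂+A₃)))) * T^(j+1) :=
            mul_le_mul_of_nonneg_right (mul_le_mul_of_nonneg_left hE' hX) hTp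
          refine mul_le_mul h5 (by linarith) (by positivity) ?_
          exact mul_nonneg (mul_nonneg hX hEbig) hTp
      _ = (K * ((j:ℝ)+1)^(A₂+A₃-1)) * c j := by
          simp only [hcdef, hKdef]
          have hr : ((j:ℝ)+1)^(A₂+A₃-1) = ((j:ℝ)+1)^(A₂+A₃) / ((j:ℝ)+1) := by
            rw [Real.rpow_sub hj1, Real.rpow_one]
          rw [hr, pow_succ, pow_succ]
          field_simp
  have hK : 0 ≤ K := by
    have hd1 : (0:ℝ) ≤ ((d:ℝ)+1)^(A₂+A₃) := Real.rpow_nonneg (by positivity) _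
    have h1 : (0:ℝ) ≤ 2*C*T := by nlinarith
    simp only [hKdef]
    have := mul_nonneg (mul_nonneg (mul_nonneg h1 (Real.exp_pos (A₂+A₃)).le) hd1)
      (by norm_num : (0:ℝ) ≤ 2)
    linarith [this]
  have hub : ∀ j : ℕ, ‖c (j+1)‖/‖c j‖ ≤ K * ((j:ℝ)+1)^(A₂+A₃-1) := by
    intro j
    rw [Real.norm_eq_abs, Real.norm_eq_abs, abs_of_pos (hpos _), abs_of_pos (hpos _),
      div_le_iff₀ (hpos j)]
    exact hstep j
  have hg0 : Tendsto (fun j : ℕ => K * ((j:ℝ)+1)^(A₂+A₃-1)) atTop (𝓝 0) := by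
    have h1 : Tendsto (fun j : ℕ => ((j:ℝ)+1)) atTop atTop :=
      tendsto_atTop_add_const_right _ 1 tendsto_natCast_atTop_atTop
    have hlt : 0 < 1 - (A₂+A₃) := by linarith
    have h2 : Tendsto (fun x : ℝ => x ^ (A₂+A₃-1)) atTop (𝓝 0) := by
      have := tendsto_rpow_neg_atTop hlt
      simpa [neg_sub] using this
    have h3 := (h2.comp h1).const_mul K
    simpa using h3
  have hratio : Tendsto (fun j : ℕ => ‖c (j+1)‖/‖c j‖) atTop (𝓝 0) :=
    squeeze_zero (fun j => by positivity) hub hg0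
  exact summable_of_ratio_test_tendsto_lt_one (by norm_num) (Filter.Eventually.of_forall
    fun j => (hpos j).ne') hratio

/-- main theorem, case A₂ + A₃ < 1: infinite analyticity radius. -/
theorem time_analyticity_infinite_radius {V : Type*} (G : WeightedGraph V)
    (hconn : G.adj.Connected) (p : V) (T : ℝ) (hT : 0 < T)
    (C A₁ A₂ A₃ : ℝ) (hC : 0 < C) (hA₁ : 0 < A₁) (hA₂ : 0 < A₂) (hA₃ : 0 ≤ A₃)
    (hsum : A₂ + A₃ < 1)
    (hdeg : ∀ x : V, G.deg x ≤ C * (G.dist x p : ℝ) ^ A₃)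
    (u : V → ℝ → ℝ)
    (hsmooth : ∀ x, ContDiffOn ℝ (⊤ : ℕ∞) (u x) (Set.Icc (-T) 0))
    (hheat : ∀ x, ∀ t ∈ Set.Icc (-T) 0,
      HasDerivWithinAt (u x) (G.lap (fun y => u y t) x) (Set.Icc (-T) 0) t)
    (hgrowth : ∀ x, ∀ t ∈ Set.Icc (-T) 0,
      |u x t| ≤ A₁ * Real.exp (A₂ * (G.dist x p : ℝ) * Real.log (G.dist x p : ℝ))) :
    ∀ x : V, ∀ t₀ ∈ Set.Icc (-T) 0, ∀ t ∈ Set.Icc (-T) 0,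
      HasSum (fun j : ℕ =>
        iteratedDerivWithin j (u x) (Set.Icc (-T) 0) t₀ * (t - t₀) ^ j / (Nat.factorial j : ℝ))
        (u x t) := by
  have hUD : UniqueDiffOn ℝ (Set.Icc (-T) 0) := uniqueDiffOn_Icc (by linarith)
  have HD : ∀ (j : ℕ) (z : V), ∀ s ∈ Set.Icc (-T) 0,
      HasDerivWithinAt (fun r => G.lapIter j (fun y => u y r) z)
        (G.lapIter (j+1) (fun y => u y s) z) (Set.Icc (-T) 0) s := by
    intro j
    induction j with
    | zero =>
      intro z s hs
      simpa [WeightedGraph.lapIter] using hheat z s hs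
    | succ j ih =>
      intro z s hs
      have hfun : (fun r => G.lapIter (j+1) (fun y => u y r) z)
          = fun r => ∑ y ∈ (G.locFin z).toFinset,
              (G.ω z y / G.μ z) * (G.lapIter j (fun w => u w r) y
                - G.lapIter j (fun w => u w r) z) := by
        funext r
        rw [WeightedGraph.lapIter_succ, WeightedGraph.lap_eq_sum]
      have hval : G.lapIter (j+1+1) (fun y => u y s) z
          = ∑ y ∈ (G.locFin z).toFinset,
              (G.ω z y / G.μ z) * (G.lapIter (j+1) (fun w => u w s) y
                - G.lapIter (j+1) (fun w => u w s) z) := by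
        rw [WeightedGraph.lapIter_succ, WeightedGraph.lap_eq_sum]
      rw [hfun, hval]
      exact HasDerivWithinAt.fun_sum fun y _ => ((ih y s hs).fun_sub (ih z s hs)).const_mul _
  have IT : ∀ (j : ℕ) (z : V), ∀ s ∈ Set.Icc (-T) 0,
      iteratedDerivWithin j (u z) (Set.Icc (-T) 0) s = G.lapIter j (fun y => u y s) z := by
    intro j
    induction j with
    | zero => intro z s hs; simp [WeightedGraph.lapIter]
    | succ j ih =>
      intro z s hs
      rw [iteratedDerivWithin_succ]
      have hcong : derivWithin (iteratedDerivWithin j (u z) (Set.Icc (-T) 0)) (Set.Icc (-T) 0) s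
          = derivWithin (fun r => G.lapIter j (fun y => u y r) z) (Set.Icc (-T) 0) s :=
        derivWithin_congr (fun r hr => ih z r hr) (ih z s hs)
      rw [hcong]
      exact (HD j z s hs).derivWithin (hUD s hs)
  have h2C : (0:ℝ) ≤ 2*C := by linarith
  have BND : ∀ (j : ℕ) (z : V), ∀ s ∈ Set.Icc (-T) 0,
      |G.lapIter j (fun y => u y s) z|
        ≤ (2*C)^j * A₁ * Real.exp (phiE A₂ A₃ j (G.dist z p + j)) := by
    intro j
    induction j with
    | zero => intro z s hs; simpa [phiE, WeightedGraph.lapIter] using hgrowth z s hs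
    | succ j ih =>
      intro z s hs
      have hM0 : (0:ℝ) ≤ (2*C)^j * A₁ * Real.exp (phiE A₂ A₃ j (G.dist z p + (j+1))) :=
        mul_nonneg (mul_nonneg (pow_nonneg h2C j) hA₁.le) (Real.exp_pos _).le
      have hcen : |G.lapIter j (fun y => u y s) z|
          ≤ (2*C)^j * A₁ * Real.exp (phiE A₂ A₃ j (G.dist z p + (j+1))) := by
        refine (ih z s hs).trans ?_
        exact mul_le_mul_of_nonneg_left (Real.exp_le_exp.mpr
          (phiE_mono A₂ A₃ hA₂.le hA₃ j (by omega)))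
          (mul_nonneg (pow_nonneg h2C j) hA₁.le)
      have hnb : ∀ y, G.ω z y ≠ 0 → |G.lapIter j (fun w => u w s) y|
          ≤ (2*C)^j * A₁ * Real.exp (phiE A₂ A₃ j (G.dist z p + (j+1))) := by
        intro y hy
        refine (ih y s hs).trans ?_
        have hdy : G.dist y p + j ≤ G.dist z p + (j+1) := by
          have := G.dist_nb hconn p z y hy
          omega
        exact mul_le_mul_of_nonneg_left (Real.exp_le_exp.mpr
          (phiE_mono A₂ A₃ hA₂.le hA₃ j hdy)) (mul_nonneg (pow_nonneg h2C j) hA₁.le)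
      have hlap := G.lap_abs_le (G.lapIter j (fun w => u w s)) z hM0 hcen hnb
      rw [← WeightedGraph.lapIter_succ] at hlap
      have hdegz : G.deg z ≤ C * Real.exp (A₃ * Real.log ((G.dist z p + (j+1) : ℕ) : ℝ)) := by
        refine (hdeg z).trans ?_
        refine mul_le_mul_of_nonneg_left ?_ hC.le
        exact rpow_le_exp_log_mul hA₃ _ (natlog_mono (by omega)) (natlog_nonneg _)
      calc |G.lapIter (j+1) (fun y => u y s) z|
          ≤ 2 * G.deg z * ((2*C)^j * A₁ * Real.exp (phiE A₂ A₃ j (G.dist z p + (j+1)))) := hlap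
        _ ≤ 2 * (C * Real.exp (A₃ * Real.log ((G.dist z p + (j+1) : ℕ) : ℝ))) *
            ((2*C)^j * A₁ * Real.exp (phiE A₂ A₃ j (G.dist z p + (j+1)))) :=
            mul_le_mul_of_nonneg_right (mul_le_mul_of_nonneg_left hdegz (by norm_num)) hM0
        _ = (2*C)^(j+1) * A₁ * Real.exp (phiE A₂ A₃ (j+1) (G.dist z p + (j+1))) := by
            rw [phiE_succ, Real.exp_add, pow_succ]
            ring
  have FD : ∀ (n : ℕ) (z : V) (τ : ℝ), ∀ s ∈ Set.Icc (-T) 0,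
      HasDerivWithinAt (fun r => ∑ j ∈ Finset.range (n+1),
          G.lapIter j (fun y => u y r) z * (τ - r)^j / (Nat.factorial j : ℝ))
        (G.lapIter (n+1) (fun y => u y s) z * (τ - s)^n / (Nat.factorial n : ℝ))
        (Set.Icc (-T) 0) s := by
    intro n
    induction n with
    | zero =>
      intro z τ s hs
      have h0 : (fun r => ∑ j ∈ Finset.range (0+1),
          G.lapIter j (fun y => u y r) z * (τ - r)^j / (Nat.factorial j : ℝ))
          = fun r => u z r := by
        funext r
        simp [WeightedGraph.lapIter]
      rw [h0]
      simpa [WeightedGraph.lapIter] using HD 0 z s hs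
    | succ n ih =>
      intro z τ s hs
      have hsplit : (fun r => ∑ j ∈ Finset.range (n+1+1),
          G.lapIter j (fun y => u y r) z * (τ - r)^j / (Nat.factorial j : ℝ))
          = fun r => (∑ j ∈ Finset.range (n+1),
              G.lapIter j (fun y => u y r) z * (τ - r)^j / (Nat.factorial j : ℝ))
            + G.lapIter (n+1) (fun y => u y r) z * (τ - r)^(n+1) / (Nat.factorial (n+1) : ℝ) := by
        funext r
        rw [Finset.sum_range_succ]
      rw [hsplit]
      have hpow : HasDerivAt (fun r : ℝ => (τ - r)^(n+1))
          (((n+1 : ℕ):ℝ) * (τ - s)^n * (-1)) s := by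
        have h := ((hasDerivAt_id s).const_sub τ).fun_pow (n+1)
        simpa using h
      have hmul := ((HD (n+1) z s hs).fun_mul hpow.hasDerivWithinAt).div_const
        ((Nat.factorial (n+1) : ℝ))
      have hadd := (ih z τ s hs).fun_add hmul
      have hfq : (Nat.factorial n : ℝ) ≠ 0 := by exact_mod_cast (Nat.factorial_pos n).ne'
      have hfact1 : ((Nat.factorial (n+1) : ℕ) : ℝ) = ((n:ℝ)+1) * (Nat.factorial n : ℝ) := by
        rw [Nat.factorial_succ]; push_cast; ring
      refine hadd.congr_deriv ?_
      symm
      rw [hfact1]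
      have hn1 : ((n:ℝ)+1) ≠ 0 := by positivity
      push_cast
      field_simp
      ring
  intro x t₀ ht₀ t ht
  have hts : |t - t₀| ≤ T := by
    rw [abs_le]
    obtain ⟨h1, h2⟩ := ht; obtain ⟨h3, h4⟩ := ht₀
    constructor <;> linarith
  have hSc := summable_master C A₁ A₂ A₃ T hC hA₁ hA₂.le hA₃ hT hsum (G.dist x p)
  set c : ℕ → ℝ := fun j : ℕ => (2*C)^j * A₁ * Real.exp (phiE A₂ A₃ j (G.dist x p + j)) *
      T^j * ((j:ℝ)+1) / (Nat.factorial j : ℝ) with hcdef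
  set a : ℕ → ℝ := fun j : ℕ =>
      G.lapIter j (fun y => u y t₀) x * (t - t₀)^j / (Nat.factorial j : ℝ) with hadef
  have hBnonneg : ∀ j : ℕ,
      (0:ℝ) ≤ (2*C)^j * A₁ * Real.exp (phiE A₂ A₃ j (G.dist x p + j)) := fun j =>
    mul_nonneg (mul_nonneg (pow_nonneg h2C j) hA₁.le) (Real.exp_pos _).le
  have ha_le : ∀ j : ℕ, ‖a j‖ ≤ c j := by
    intro j
    have hf : (0:ℝ) < (Nat.factorial j : ℝ) := by exact_mod_cast Nat.factorial_pos j
    simp only [hadef, hcdef]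
    rw [Real.norm_eq_abs, abs_div, abs_mul, abs_pow, abs_of_pos hf]
    have h1 : |G.lapIter j (fun y => u y t₀) x| * |t - t₀|^j
        ≤ ((2*C)^j * A₁ * Real.exp (phiE A₂ A₃ j (G.dist x p + j))) * T^j :=
      mul_le_mul (BND j x t₀ ht₀) (pow_le_pow_left₀ (abs_nonneg _) hts j)
        (pow_nonneg (abs_nonneg _) j) (hBnonneg j)
    have h2 : ((2*C)^j * A₁ * Real.exp (phiE A₂ A₃ j (G.dist x p + j))) * T^j
        ≤ ((2*C)^j * A₁ * Real.exp (phiE A₂ A₃ j (G.dist x p + j))) * T^j * ((j:ℝ)+1) := by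
      refine le_mul_of_one_le_right ?_ ?_
      · exact mul_nonneg (hBnonneg j) (pow_nonneg hT.le j)
      · have : (0:ℝ) ≤ (j:ℝ) := Nat.cast_nonneg j
        linarith
    exact (div_le_div_iff_of_pos_right hf).mpr (h1.trans h2)
  have hSa : Summable a := Summable.of_norm_bounded hSc ha_le
  have hfin : HasSum a (∑' j, a j) := hSa.hasSum
  have hpart' : Tendsto (fun n : ℕ => ∑ j ∈ Finset.range (n+1), a j) atTop
      (𝓝 (∑' j, a j)) := by
    have := hfin.tendsto_sum_nat.comp (tendsto_add_atTop_nat 1)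
    simpa [Function.comp_def] using this
  have hc0 : Tendsto (fun n : ℕ => c (n+1)) atTop (𝓝 0) := by
    have := hSc.tendsto_atTop_zero.comp (tendsto_add_atTop_nat 1)
    simpa [Function.comp_def] using this
  have hrem : ∀ n : ℕ, |u x t - ∑ j ∈ Finset.range (n+1), a j| ≤ c (n+1) := by
    intro n
    have hf : (0:ℝ) < (Nat.factorial n : ℝ) := by exact_mod_cast Nat.factorial_pos n
    have hB0 : (0:ℝ) ≤ (2*C)^(n+1) * A₁ *
        Real.exp (phiE A₂ A₃ (n+1) (G.dist x p + (n+1))) := hBnonneg (n+1)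
    have hbound : ∀ s ∈ Set.Icc (-T) 0,
        ‖G.lapIter (n+1) (fun y => u y s) x * (t - s)^n / (Nat.factorial n : ℝ)‖
          ≤ ((2*C)^(n+1) * A₁ * Real.exp (phiE A₂ A₃ (n+1) (G.dist x p + (n+1)))) * T^n
            / (Nat.factorial n : ℝ) := by
      intro s hs
      rw [Real.norm_eq_abs, abs_div, abs_mul, abs_pow, abs_of_pos hf]
      have hts' : |t - s| ≤ T := by
        rw [abs_le]
        obtain ⟨h1, h2⟩ := ht; obtain ⟨h3, h4⟩ := hs
        constructor <;> linarith
      have h1 : |G.lapIter (n+1) (fun y => u y s) x| * |t - s|^n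
          ≤ ((2*C)^(n+1) * A₁ * Real.exp (phiE A₂ A₃ (n+1) (G.dist x p + (n+1)))) * T^n :=
        mul_le_mul (BND (n+1) x s hs) (pow_le_pow_left₀ (abs_nonneg _) hts' n)
          (pow_nonneg (abs_nonneg _) n) hB0
      exact (div_le_div_iff_of_pos_right hf).mpr h1
    have hmvt := Convex.norm_image_sub_le_of_norm_hasDerivWithin_le
      (fun s hs => FD n x t s hs) hbound (convex_Icc _ _) ht₀ ht
    have hFt : (∑ j ∈ Finset.range (n+1),
        G.lapIter j (fun y => u y t) x * (0:ℝ)^j / (Nat.factorial j : ℝ)) = u x t := by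
      have h0 : ∀ b ∈ Finset.range (n+1), b ≠ 0 →
          G.lapIter b (fun y => u y t) x * (0:ℝ)^b / (Nat.factorial b : ℝ) = 0 := by
        intro b _ hb
        simp [zero_pow hb]
      rw [Finset.sum_eq_single_of_mem 0 (Finset.mem_range.mpr (Nat.succ_pos n)) h0]
      simp [WeightedGraph.lapIter]
    have hFt₀ : (∑ j ∈ Finset.range (n+1),
        G.lapIter j (fun y => u y t₀) x * (t - t₀)^j / (Nat.factorial j : ℝ))
        = ∑ j ∈ Finset.range (n+1), a j := by
      simp only [hadef]
    have hmvt' : |u x t - ∑ j ∈ Finset.range (n+1), a j|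
        ≤ (((2*C)^(n+1) * A₁ * Real.exp (phiE A₂ A₃ (n+1) (G.dist x p + (n+1)))) * T^n
            / (Nat.factorial n : ℝ)) * |t - t₀| := by
      simpa [sub_self, hFt, hFt₀, Real.norm_eq_abs] using hmvt
    have hstep2 : (((2*C)^(n+1) * A₁ * Real.exp (phiE A₂ A₃ (n+1) (G.dist x p + (n+1)))) * T^n
            / (Nat.factorial n : ℝ)) * |t - t₀|
        ≤ (((2*C)^(n+1) * A₁ * Real.exp (phiE A₂ A₃ (n+1) (G.dist x p + (n+1)))) * T^n
            / (Nat.factorial n : ℝ)) * T := by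
      refine mul_le_mul_of_nonneg_left hts ?_
      exact div_nonneg (mul_nonneg hB0 (pow_nonneg hT.le n)) hf.le
    have hkey : (((2*C)^(n+1) * A₁ * Real.exp (phiE A₂ A₃ (n+1) (G.dist x p + (n+1)))) * T^n
            / (Nat.factorial n : ℝ)) * T
        = ((2*C)^(n+1) * A₁ * Real.exp (phiE A₂ A₃ (n+1) (G.dist x p + (n+1)))) * T^(n+1)
            * ((n:ℝ)+1) / (Nat.factorial (n+1) : ℝ) := by
      rw [Nat.factorial_succ]; push_cast; field_simp; ring
    have hlast : ((2*C)^(n+1) * A₁ * Real.exp (phiE A₂ A₃ (n+1) (G.dist x p + (n+1)))) * T^(n+1)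
            * ((n:ℝ)+1) / (Nat.factorial (n+1) : ℝ) ≤ c (n+1) := by
      simp only [hcdef]
      have hfp : (0:ℝ) < (Nat.factorial (n+1) : ℝ) := by exact_mod_cast Nat.factorial_pos (n+1)
      refine (div_le_div_iff_of_pos_right hfp).mpr ?_
      refine mul_le_mul_of_nonneg_left ?_ (mul_nonneg (hBnonneg (n+1)) (pow_nonneg hT.le (n+1)))
      push_cast
      linarith
    calc |u x t - ∑ j ∈ Finset.range (n+1), a j| ≤ _ := hmvt'
      _ ≤ _ := hstep2
      _ = _ := hkey
      _ ≤ c (n+1) := hlast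
  have hto : Tendsto (fun n : ℕ => ∑ j ∈ Finset.range (n+1), a j) atTop (𝓝 (u x t)) := by
    have h1 : ∀ n : ℕ, ‖(∑ j ∈ Finset.range (n+1), a j) - u x t‖ ≤ c (n+1) := by
      intro n
      rw [Real.norm_eq_abs, abs_sub_comm]
      exact hrem n
    have h3 := squeeze_zero_norm h1 hc0
    have h4 := h3.add_const (u x t)
    simpa using h4
  have huniq : (∑' j, a j) = u x t := tendsto_nhds_unique hpart' hto
  have hgoal : (fun j : ℕ => iteratedDerivWithin j (u x) (Set.Icc (-T) 0) t₀ * (t - t₀)^j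
      / (Nat.factorial j : ℝ)) = a := by
    funext j
    rw [IT j x t₀ ht₀, hadef]
  rw [hgoal, ← huniq]
  exact hfin
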